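/- Every element s of S(G,O) with α(s) = 1 and G_s = G is fixed by the simultaneous conjugation action of G, i.e., ρ(g)(s) = s for all g ∈ G. -/

import Mathlib

/-- The defining relations of the factorization semigroup `S(G,O)`:
`x_{g₁} ⬝ x_{g₂} = x_{g₂} ⬝ x_{g₂⁻¹ g₁ g₂}`. -/
inductive FactRel (G : Type) [Group G] (O : Set G) :
    FreeSemigroup {g : G // g ∈ O} → FreeSemigroup {g : G // g ∈ O} → Prop
  | rel (g₁ g₂ : {g : G // g ∈ O}) (h : (g₂ : G)⁻¹ * g₁ * g₂ ∈ O) :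
      FactRel G O (FreeSemigroup.of g₁ * FreeSemigroup.of g₂)
        (FreeSemigroup.of g₂ * FreeSemigroup.of ⟨(g₂ : G)⁻¹ * g₁ * g₂, h⟩)

/-- The factorization semigroup `S(G,O)`. -/
def FactS (G : Type) [Group G] (O : Set G) :=
  (conGen (FactRel G O)).Quotient

instance (G : Type) [Group G] (O : Set G) : Semigroup (FactS G O) :=
  Con.semigroup _

/-- The generator `x_g` of `S(G,O)`. -/
def xg {G : Type} [Group G] {O : Set G} (g : {g : G // g ∈ O}) : FactS G O :=
  (conGen (FactRel G O)).toQuotient (FreeSemigroup.of g)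

/-- The element of `S(G,O)` given by the word `x_{g} ⬝ x_{g₁} ⬝ ... ⬝ x_{gₖ}`. -/
def wordOf {G : Type} [Group G] {O : Set G} (g : {g : G // g ∈ O})
    (gs : List {g : G // g ∈ O}) : FactS G O :=
  gs.foldl (fun s h => s * xg h) (xg g)

/-
Moving an element `t` of `S(G,O)` past `u` conjugates `u` by the product of `t`:
`t * u = ρ(α t) u * t`. By induction on `t` this gives `ρ(α t) t = t`. If `α (t * u) = 1`, then
`α t = (α u)⁻¹` fixes both `t` and `u`, hence `t * u`. So for `s = x_{g₁} ⋯ x_{gₙ}` with `α s = 1`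
the stabilizer of `s` contains every prefix product `g₁ ⋯ gₖ`, hence every letter
`gₖ = (g₁ ⋯ gₖ₋₁)⁻¹ (g₁ ⋯ gₖ)`, hence `G_s = G`.
-/

variable {G : Type} [Group G] {O : Set G}

@[elab_as_elim]
theorem FactS.induction_on {C : FactS G O → Prop} (s : FactS G O) (gen : ∀ g, C (xg g))
    (mul : ∀ a b, C a → C b → C (a * b)) : C s := by
  induction s using Con.induction_on with
  | H w =>
    induction w using FreeSemigroup.recOnMul with
    | ih1 g => exact gen g
    | ih2 a b ha hb => exact mul _ _ ha hb

theorem wordOf_append_singleton (g h : {g : G // g ∈ O}) (l : List {g : G // g ∈ O}) :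
    wordOf g (l ++ [h]) = wordOf g l * xg h := by
  simp [wordOf, List.foldl_append]

theorem exists_wordOf_eq (s : FactS G O) : ∃ g l, wordOf g l = s := by
  induction s using Con.induction_on with
  | H w =>
    obtain ⟨g, l⟩ := w
    refine ⟨g, l, ?_⟩
    induction l using List.reverseRecOn with
    | nil => rfl
    | append_singleton l h ih =>
      rw [wordOf_append_singleton, ih]
      rfl

theorem xg_mul_xg_of_mem (g₁ g₂ : {g : G // g ∈ O}) (h : (g₂ : G)⁻¹ * g₁ * g₂ ∈ O) :
    xg g₁ * xg g₂ = xg g₂ * xg ⟨(g₂ : G)⁻¹ * g₁ * g₂, h⟩ :=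
  (Con.eq _).mpr (ConGen.Rel.of _ _ (FactRel.rel g₁ g₂ h))

def ConjOnGenerators (hO : ∀ g ∈ O, ∀ h : G, h⁻¹ * g * h ∈ O) (ρ : G →* MulAut (FactS G O)) :
    Prop :=
  ∀ (h : G) (g : G) (hg : g ∈ O),
    ρ h (xg ⟨g, hg⟩) = xg ⟨h * g * h⁻¹, by simpa using hO g hg h⁻¹⟩

section Conjugation

variable {hO : ∀ g ∈ O, ∀ h : G, h⁻¹ * g * h ∈ O} {ρ : G →* MulAut (FactS G O)}
  {α : FactS G O →ₙ* G}

theorem xg_mul_xg (hρ : ConjOnGenerators hO ρ) (h g : {g : G // g ∈ O}) :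
    xg h * xg g = ρ h (xg g) * xg h := by
  obtain ⟨g, hg⟩ := g
  obtain ⟨h, hh⟩ := h
  rw [hρ, xg_mul_xg_of_mem ⟨h * g * h⁻¹, by simpa using hO g hg h⁻¹⟩ ⟨h, hh⟩
    (by simpa [mul_assoc] using hg)]
  congr
  group

theorem xg_mul (hρ : ConjOnGenerators hO ρ) (h : {g : G // g ∈ O}) (u : FactS G O) :
    xg h * u = ρ h u * xg h := by
  induction u using FactS.induction_on with
  | gen g => exact xg_mul_xg hρ h g
  | mul a b ha hb => rw [← mul_assoc, ha, mul_assoc, hb, ← mul_assoc, map_mul]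

theorem mul_eq_conj_mul (hρ : ConjOnGenerators hO ρ) (hα : ∀ g, α (xg g) = (g : G))
    (t u : FactS G O) : t * u = ρ (α t) u * t := by
  induction t using FactS.induction_on generalizing u with
  | gen g => rw [hα]; exact xg_mul hρ g u
  | mul a b ha hb =>
    rw [mul_assoc, hb, ← mul_assoc, ha, mul_assoc, map_mul α, map_mul ρ, MulAut.mul_apply]

theorem conj_alpha_apply_self (hρ : ConjOnGenerators hO ρ) (hα : ∀ g, α (xg g) = (g : G))
    (t : FactS G O) : ρ (α t) t = t := by
  induction t using FactS.induction_on with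
  | gen g =>
    obtain ⟨g, hg⟩ := g
    rw [hα, hρ]
    congr
    group
  | mul a b ha hb =>
    rw [map_mul α, map_mul ρ, MulAut.mul_apply, map_mul (ρ (α b)), hb,
      ← mul_eq_conj_mul hρ hα, map_mul, ha, ← mul_eq_conj_mul hρ hα]

theorem conj_alpha_apply_mul (hρ : ConjOnGenerators hO ρ) (hα : ∀ g, α (xg g) = (g : G))
    {t u : FactS G O} (h : α (t * u) = 1) : ρ (α t) (t * u) = t * u := by
  have hu : ρ (α t) u = u := by
    have hαu : α u = (α t)⁻¹ := eq_inv_of_mul_eq_one_right (by rwa [map_mul] at h)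
    rw [← inv_inv (α t), ← hαu, map_inv, MulAut.inv_apply, MulEquiv.symm_apply_eq,
      conj_alpha_apply_self hρ hα]
  rw [map_mul, conj_alpha_apply_self hρ hα, hu]

end Conjugation

def MonoidHom.stabilizer {M : Type*} [Mul M] (ρ : G →* MulAut M) (s : M) : Subgroup G :=
  (MulAction.stabilizer (Equiv.Perm M) s).comap ((MulAut.toPerm M).comp ρ)

theorem MonoidHom.mem_stabilizer_iff {M : Type*} [Mul M] {ρ : G →* MulAut M} {s : M} {g : G} :
    g ∈ ρ.stabilizer s ↔ ρ g s = s :=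
  Iff.rfl

theorem letters_mem_of_forall_prefix {α : FactS G O →ₙ* G} (hα : ∀ g, α (xg g) = (g : G))
    {H : Subgroup G} {s : FactS G O} (hs : ∀ t, t = s ∨ t ∣ s → α t ∈ H)
    (g : {g : G // g ∈ O}) (l : List {g : G // g ∈ O}) (hw : wordOf g l = s ∨ wordOf g l ∣ s) :
    ∀ a ∈ g :: l, (a : G) ∈ H := by
  induction l using List.reverseRecOn with
  | nil =>
    simp only [List.mem_singleton, forall_eq]
    simpa [wordOf, hα] using hs _ hw
  | append_singleton l h ih =>
    rw [wordOf_append_singleton] at hw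
    have hl : wordOf g l ∣ s := by
      rcases hw with hw | hw
      · exact hw ▸ dvd_mul_right _ _
      · exact dvd_trans (dvd_mul_right _ _) hw
    have hh : (h : G) = (α (wordOf g l))⁻¹ * α (wordOf g l * xg h) := by
      rw [map_mul, hα, inv_mul_cancel_left]
    intro a ha
    rw [← List.cons_append, List.mem_append, List.mem_singleton] at ha
    rcases ha with ha | rfl
    · exact ih (Or.inr hl) a ha
    · rw [hh]
      exact mul_mem (inv_mem (hs _ (Or.inr hl))) (hs _ hw)

theorem stmt12 (G : Type) [Group G] (O : Set G)
    (hO : ∀ g ∈ O, ∀ h : G, h⁻¹ * g * h ∈ O)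
    (α : FactS G O →ₙ* G) (hα : ∀ g : {g : G // g ∈ O}, α (xg g) = (g : G))
    (ρ : G →* MulAut (FactS G O))
    (hρ : ∀ (h : G) (g : G) (hg : g ∈ O),
      ρ h (xg ⟨g, hg⟩) = xg ⟨h * g * h⁻¹, by simpa using hO g hg h⁻¹⟩)
    (Gs : FactS G O → Subgroup G)
    (hGs : ∀ (g : {g : G // g ∈ O}) (gs : List {g : G // g ∈ O}),
      Gs (wordOf g gs) = Subgroup.closure {a : G | a ∈ (g :: gs).map Subtype.val}) :
    ∀ s : FactS G O, α s = 1 → Gs s = ⊤ → ∀ g : G, ρ g s = s := by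
  intro s hs hGs_top a
  obtain ⟨g, l, rfl⟩ := exists_wordOf_eq s
  have hle : Gs (wordOf g l) ≤ ρ.stabilizer (wordOf g l) := by
    rw [hGs, Subgroup.closure_le]
    intro _ ha
    obtain ⟨x, hx, rfl⟩ := List.mem_map.mp ha
    refine letters_mem_of_forall_prefix hα ?_ g l (Or.inl rfl) x hx
    rintro t (rfl | ⟨u, hu⟩)
    · exact hs ▸ one_mem _
    · rw [hu] at hs ⊢
      exact conj_alpha_apply_mul (hO := hO) hρ hα hs
  exact MonoidHom.mem_stabilizer_iff.mp (hle (hGs_top ▸ Subgroup.mem_top a))
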